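/- Let φ: M_A → M_B be a Hermitian-preserving linear map and let 1 ≤ k. The following are equivalent to φ being k-positive: (1) (1_A ⊗ φ)(X) is k-blockpositive for every positive semidefinite X ∈ M_A ⊗ M_A; (2) (1_B ⊗ ψ)(C_{φ*}) is k-blockpositive for every completely positive ψ: M_A → M_A; (3) (1_A ⊗ σ*)(C_φ) is positive semidefinite for every k-superpositive σ: M_A → M_B; (4) (1_A ⊗ φ*)(X) is positive semidefinite for every X ∈ S_k. -/

import Mathlib

open Matrix Finset
open scoped ComplexOrder Kronecker

/-- The algebra of `n × n` complex matrices. -/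
abbrev Mat (n : ℕ) := Matrix (Fin n) (Fin n) ℂ

/-- Linear maps between matrix algebras. -/
abbrev MMap (m n : ℕ) := Mat m →ₗ[ℂ] Mat n

/-- The bilinear pairing `⟨a,b⟩ = Tr(aᵀ b)`. -/
noncomputable def mpair {ι : Type*} [Fintype ι] (x y : Matrix ι ι ℂ) : ℂ :=
  (xᵀ * y).trace

/-- The Choi matrix `C_φ = Σ_{i,j} e_{ij} ⊗ φ(e_{ij})`. -/
noncomputable def choi {m n : ℕ} (φ : MMap m n) :
    Matrix (Fin m × Fin n) (Fin m × Fin n) ℂ :=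
  Matrix.of fun p q => φ (Matrix.single p.1 q.1 1) p.2 q.2

/-- The pairing on maps `⟨φ,ψ⟩ = ⟨C_φ, C_ψ⟩`. -/
noncomputable def mapPair {m n : ℕ} (φ ψ : MMap m n) : ℂ := mpair (choi φ) (choi ψ)

/-- The adjoint `φ*` with respect to the pairing `⟨a,b⟩ = Tr(aᵀ b)`:
it satisfies `⟨φ(a),b⟩ = ⟨a,φ*(b)⟩`. -/
noncomputable def adjMap {m n : ℕ} (φ : MMap m n) : MMap n m where
  toFun y := Matrix.of fun i j => mpair (φ (Matrix.single i j 1)) y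
  map_add' y z := by
    ext i j
    simp [mpair, Matrix.mul_add]
  map_smul' c y := by
    ext i j
    simp [mpair, Matrix.mul_smul]

/-- Hermitian-preserving maps: `φ(a*) = φ(a)*`. -/
def IsHermP {m n : ℕ} (φ : MMap m n) : Prop := ∀ x : Mat m, φ xᴴ = (φ x)ᴴ

/-- The real vector space `H(M_A,M_B)` of Hermitian-preserving maps, as a set. -/
def HermSet (m n : ℕ) : Set (MMap m n) := {φ | IsHermP φ}

/-- Positive maps: mapping positive semidefinite matrices to positive semidefinite ones. -/
def IsPosMap {m n : ℕ} (φ : MMap m n) : Prop :=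
  ∀ x : Mat m, x.PosSemidef → (φ x).PosSemidef

/-- Completely positive maps: those whose Choi matrix is positive semidefinite. -/
def IsCP {m n : ℕ} (φ : MMap m n) : Prop := (choi φ).PosSemidef

/-- The cone `CP` of completely positive maps. -/
def CPset (m n : ℕ) : Set (MMap m n) := {φ | IsCP φ}

/-- `K₁ ∘ K₀ = {φ₁ ∘ φ₀ : φ₁ ∈ K₁, φ₀ ∈ K₀}`. -/
def compSet {m n p : ℕ} (K1 : Set (MMap n p)) (K0 : Set (MMap m n)) : Set (MMap m p) :=
  {χ | ∃ φ₁ ∈ K1, ∃ φ₀ ∈ K0, χ = φ₁ ∘ₗ φ₀}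

/-- `K₂ ∘ K₁ ∘ K₀ = {φ₂ ∘ φ₁ ∘ φ₀ : φᵢ ∈ Kᵢ}`. -/
def comp3 {m n p q : ℕ} (K2 : Set (MMap p q)) (K1 : Set (MMap n p)) (K0 : Set (MMap m n)) :
    Set (MMap m q) :=
  {χ | ∃ φ₂ ∈ K2, ∃ φ₁ ∈ K1, ∃ φ₀ ∈ K0, χ = φ₂ ∘ₗ φ₁ ∘ₗ φ₀}

/-- The dual cone `K° = {ψ ∈ H(M_A,M_B) : ⟨φ,ψ⟩ ≥ 0 for all φ ∈ K}`. -/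
def dualCone {m n : ℕ} (K : Set (MMap m n)) : Set (MMap m n) :=
  {ψ | IsHermP ψ ∧ ∀ φ ∈ K, 0 ≤ mapPair φ ψ}

/-- `K* = {φ* : φ ∈ K}`. -/
noncomputable def starSet {m n : ℕ} (K : Set (MMap m n)) : Set (MMap n m) := adjMap '' K

/-- `K^⊳ = (K ∘ CP_A)°`. -/
def rdualSet {m n : ℕ} (K : Set (MMap m n)) : Set (MMap m n) :=
  dualCone (compSet K (CPset m m))

/-- `K^⊲ = (CP_B ∘ K)°`. -/
def ldualSet {m n : ℕ} (K : Set (MMap m n)) : Set (MMap m n) :=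
  dualCone (compSet (CPset n n) K)

/-- A convex cone of maps: closed under addition and nonnegative real scaling. -/
def IsConeSet {m n : ℕ} (K : Set (MMap m n)) : Prop :=
  (∀ φ ∈ K, ∀ ψ ∈ K, φ + ψ ∈ K) ∧ (∀ φ ∈ K, ∀ r : ℝ, 0 ≤ r → (r : ℂ) • φ ∈ K)

/-- A closed convex cone of maps (closedness via the Choi isomorphism). -/
def IsClosedConeSet {m n : ℕ} (K : Set (MMap m n)) : Prop :=
  IsConeSet K ∧ IsClosed (choi '' K)

/-- Ampliation `1_Z ⊗ σ : M_Z ⊗ M_X → M_Z ⊗ M_Y`. -/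
def idTensor {z x y : ℕ} (σ : MMap x y)
    (M : Matrix (Fin z × Fin x) (Fin z × Fin x) ℂ) :
    Matrix (Fin z × Fin y) (Fin z × Fin y) ℂ :=
  Matrix.of fun p q => σ (Matrix.of fun k l => M (p.1, k) (q.1, l)) p.2 q.2

/-- Ampliation `σ ⊗ 1_Z : M_X ⊗ M_Z → M_Y ⊗ M_Z`. -/
def tensorId {x y z : ℕ} (σ : MMap x y)
    (M : Matrix (Fin x × Fin z) (Fin x × Fin z) ℂ) :
    Matrix (Fin y × Fin z) (Fin y × Fin z) ℂ :=
  Matrix.of fun p q => σ (Matrix.of fun i j => M (i, p.2) (j, q.2)) p.1 q.1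

/-- `S_1`: the closed convex cone generated by `x ⊗ y` with `x, y` positive semidefinite. -/
def SepCone (m n : ℕ) : Set (Matrix (Fin m × Fin n) (Fin m × Fin n) ℂ) :=
  closure {X | ∃ (r : ℕ) (x : Fin r → Mat m) (y : Fin r → Mat n),
    (∀ i, (x i).PosSemidef ∧ (y i).PosSemidef) ∧ X = ∑ i, x i ⊗ₖ y i}

/-- `SP_1`: Hermitian-preserving maps with separable Choi matrix. -/
def SP1set (m n : ℕ) : Set (MMap m n) := {φ | IsHermP φ ∧ choi φ ∈ SepCone m n}


/-- Vectors of Schmidt rank at most `k`. -/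
def SchmidtRankLE (k : ℕ) {m n : ℕ} (ξ : Fin m × Fin n → ℂ) : Prop :=
  ∃ (u : Fin k → Fin m → ℂ) (v : Fin k → Fin n → ℂ),
    ξ = fun p => ∑ i, u i p.1 * v i p.2

/-- `k`-blockpositive matrices: `⟨Y, |ξ⟩⟨ξ|⟩ ≥ 0` for every `ξ` of Schmidt rank at most `k`. -/
def BlockPos (k : ℕ) {m n : ℕ} (Y : Matrix (Fin m × Fin n) (Fin m × Fin n) ℂ) : Prop :=
  ∀ ξ : Fin m × Fin n → ℂ, SchmidtRankLE k ξ →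
    0 ≤ mpair Y (Matrix.of fun p q => ξ p * star (ξ q))

/-- `S_k`: the closed convex cone generated by `|ξ⟩⟨ξ|` for `ξ` of Schmidt rank at most `k`. -/
def SchmidtCone (k m n : ℕ) : Set (Matrix (Fin m × Fin n) (Fin m × Fin n) ℂ) :=
  closure {X | ∃ (r : ℕ) (ξ : Fin r → Fin m × Fin n → ℂ),
    (∀ i, SchmidtRankLE k (ξ i)) ∧
    X = ∑ i, Matrix.of fun p q => ξ i p * star (ξ i q)}

/-- `k`-positive maps: the ampliation `1_{M_k} ⊗ φ` is a positive map. -/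
def IsKPos (k : ℕ) {m n : ℕ} (φ : MMap m n) : Prop :=
  ∀ X : Matrix (Fin k × Fin m) (Fin k × Fin m) ℂ, X.PosSemidef → (idTensor φ X).PosSemidef

/-- The transpose map as a linear map. -/
def tmap (m : ℕ) : MMap m m where
  toFun x := xᵀ
  map_add' x y := by simp [Matrix.transpose_add]
  map_smul' c x := by simp [Matrix.transpose_smul]

/-- Completely copositive maps: `CCP = {φ ∘ t : φ ∈ CP}`. -/
def CCPset (m : ℕ) : Set (MMap m m) := {χ | ∃ φ, IsCP φ ∧ χ = φ ∘ₗ tmap m}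

/-- PPT maps: `PPT = CP ∩ CCP`. -/
def PPTset (m : ℕ) : Set (MMap m m) := CPset m m ∩ CCPset m

/-- Decomposable maps: the convex hull of `CP` and `CCP`. -/
noncomputable def DECset (m : ℕ) : Set (MMap m m) := convexHull ℝ (CPset m m ∪ CCPset m)

/-- The cone `P_1` of positive maps. -/
def P1set (m n : ℕ) : Set (MMap m n) := {φ | IsPosMap φ}

/-- A right-mapping cone: a closed convex cone of positive (Hermitian-preserving) maps `L`
with `L ∘ CP_A ⊆ L`. -/
def IsRMC {m n : ℕ} (L : Set (MMap m n)) : Prop :=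
  L ⊆ HermSet m n ∧ (∀ φ ∈ L, IsPosMap φ) ∧ IsClosedConeSet L ∧
    compSet L (CPset m m) ⊆ L

/-- A left-mapping cone: a closed convex cone of positive (Hermitian-preserving) maps `L`
with `CP_B ∘ L ⊆ L`. -/
def IsLMC {m n : ℕ} (L : Set (MMap m n)) : Prop :=
  L ⊆ HermSet m n ∧ (∀ φ ∈ L, IsPosMap φ) ∧ IsClosedConeSet L ∧
    compSet (CPset n n) L ⊆ L


-- Auxiliary lemmas

def vproj {ι : Type*} (ξ : ι → ℂ) : Matrix ι ι ℂ := Matrix.of fun p q => ξ p * star (ξ q)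

lemma mpair_eq_sum {ι : Type*} [Fintype ι] (x y : Matrix ι ι ℂ) :
    mpair x y = ∑ i, ∑ j, x i j * y i j := by
  simp [mpair, Matrix.trace, Matrix.mul_apply, Matrix.diag]
  rw [Finset.sum_comm]
lemma sum4_comm {α β γ δ M : Type*} [Fintype α] [Fintype β] [Fintype γ] [Fintype δ]
    [AddCommMonoid M] (f : α → β → γ → δ → M) :
    ∑ a, ∑ b, ∑ c, ∑ d, f a b c d = ∑ c, ∑ d, ∑ a, ∑ b, f a b c d := by
  have h1 : ∀ a, ∑ b, ∑ c, ∑ d, f a b c d = ∑ c, ∑ d, ∑ b, f a b c d := by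
    intro a
    rw [Finset.sum_comm]
    exact Finset.sum_congr rfl fun c _ => Finset.sum_comm
  calc ∑ a, ∑ b, ∑ c, ∑ d, f a b c d
      = ∑ a, ∑ c, ∑ d, ∑ b, f a b c d := Finset.sum_congr rfl fun a _ => h1 a
    _ = ∑ c, ∑ a, ∑ d, ∑ b, f a b c d := Finset.sum_comm
    _ = ∑ c, ∑ d, ∑ a, ∑ b, f a b c d := Finset.sum_congr rfl fun c _ => Finset.sum_comm
lemma choi_apply {m n : ℕ} (φ : MMap m n) (p q : Fin m × Fin n) :
    choi φ p q = φ (Matrix.single p.1 q.1 1) p.2 q.2 := rfl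
lemma adjMap_apply {m n : ℕ} (φ : MMap m n) (y : Mat n) (i j : Fin m) :
    adjMap φ y i j = mpair (φ (Matrix.single i j 1)) y := rfl
lemma map_eq_choi {m n : ℕ} (φ : MMap m n) (x : Mat m) (q q' : Fin n) :
    φ x q q' = ∑ p, ∑ p', x p p' * choi φ (p, q) (p', q') := by
  conv_lhs => rw [Matrix.matrix_eq_sum_single x]
  rw [map_sum, Matrix.sum_apply]
  apply Finset.sum_congr rfl; intro p _
  rw [map_sum, Matrix.sum_apply]
  apply Finset.sum_congr rfl; intro p' _
  have : Matrix.single p p' (x p p') = x p p' • Matrix.single p p' 1 := by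
    rw [Matrix.smul_single, smul_eq_mul, mul_one]
  rw [this, _root_.map_smul]
  simp [choi_apply]
lemma idTensor_apply_choi {z x y : ℕ} (σ : MMap x y)
    (M : Matrix (Fin z × Fin x) (Fin z × Fin x) ℂ) (p q : Fin z × Fin y) :
    idTensor σ M p q = ∑ s, ∑ t, M (p.1, s) (q.1, t) * choi σ (s, p.2) (t, q.2) := by
  rw [idTensor, Matrix.of_apply, map_eq_choi]
  simp

-- NEW MATERIAL

lemma mpair_pair {α β : Type*} [Fintype α] [Fintype β] (X Y : Matrix (α × β) (α × β) ℂ) :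
    mpair X Y = ∑ p, ∑ p', ∑ q, ∑ q', X (p, q) (p', q') * Y (p, q) (p', q') := by
  rw [mpair_eq_sum, Fintype.sum_prod_type]
  apply Finset.sum_congr rfl; intro p _
  simp only [Fintype.sum_prod_type]
  exact Finset.sum_comm

noncomputable def ofChoi {m n : ℕ} (C : Matrix (Fin m × Fin n) (Fin m × Fin n) ℂ) :
    MMap m n where
  toFun x := Matrix.of fun q q' => ∑ p, ∑ p', x p p' * C (p, q) (p', q')
  map_add' x y := by
    ext q q'
    simp [add_mul, Finset.sum_add_distrib]
  map_smul' c x := by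
    ext q q'
    simp [Finset.mul_sum, mul_assoc]

lemma ofChoi_apply {m n : ℕ} (C : Matrix (Fin m × Fin n) (Fin m × Fin n) ℂ) (x : Mat m)
    (q q' : Fin n) : ofChoi C x q q' = ∑ p, ∑ p', x p p' * C (p, q) (p', q') := rfl

lemma choi_ofChoi {m n : ℕ} (C : Matrix (Fin m × Fin n) (Fin m × Fin n) ℂ) :
    choi (ofChoi C) = C := by
  ext ⟨a, s⟩ ⟨b, t⟩
  rw [choi_apply, ofChoi_apply]
  simp [Matrix.single, ite_and, Finset.sum_ite_eq]

lemma ofChoi_choi {m n : ℕ} (φ : MMap m n) : ofChoi (choi φ) = φ := by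
  apply LinearMap.ext; intro x
  ext q q'
  rw [ofChoi_apply, ← map_eq_choi]

lemma choi_inj {m n : ℕ} {φ ψ : MMap m n} (h : choi φ = choi ψ) : φ = ψ := by
  rw [← ofChoi_choi φ, ← ofChoi_choi ψ, h]

lemma choi_adjMap {m n : ℕ} (φ : MMap m n) (p p' : Fin m) (q q' : Fin n) :
    choi (adjMap φ) (q, p) (q', p') = choi φ (p, q) (p', q') := by
  rw [choi_apply, adjMap_apply, mpair_eq_sum, choi_apply]
  simp [Matrix.single, ite_and, Finset.sum_ite_eq, mul_comm]

lemma adjMap_adjMap {m n : ℕ} (φ : MMap m n) : adjMap (adjMap φ) = φ := by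
  apply choi_inj
  ext ⟨p, q⟩ ⟨p', q'⟩
  rw [choi_adjMap, choi_adjMap]

lemma stdBasisMatrix_conjT {m : ℕ} (p p' : Fin m) :
    (Matrix.single p p' (1 : ℂ))ᴴ = Matrix.single p' p 1 := by
  ext i j
  simp [Matrix.single, Matrix.conjTranspose_apply, and_comm]

lemma isHermitian_choi {m n : ℕ} {φ : MMap m n} (hφ : IsHermP φ) :
    (choi φ).IsHermitian := by
  ext ⟨p, q⟩ ⟨p', q'⟩
  rw [Matrix.conjTranspose_apply, choi_apply, choi_apply]
  have := congrFun (congrFun (hφ (Matrix.single p p' 1)) q') q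
  rw [stdBasisMatrix_conjT] at this
  rw [this]
  simp [Matrix.conjTranspose_apply]

lemma isHermP_of_choi {m n : ℕ} {φ : MMap m n} (h : (choi φ).IsHermitian) :
    IsHermP φ := by
  intro x
  ext q q'
  rw [map_eq_choi, Matrix.conjTranspose_apply, map_eq_choi]
  rw [star_sum]
  rw [Finset.sum_comm]
  apply Finset.sum_congr rfl; intro p _
  rw [star_sum]
  apply Finset.sum_congr rfl; intro p' _
  rw [star_mul']
  rw [Matrix.conjTranspose_apply]
  congr 1
  have : star (choi φ (p, q') (p', q)) = (choi φ)ᴴ (p', q) (p, q') := rfl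
  rw [this, h]

lemma isHermP_adjMap {m n : ℕ} {φ : MMap m n} (hφ : IsHermP φ) : IsHermP (adjMap φ) := by
  apply isHermP_of_choi
  have hc := isHermitian_choi hφ
  ext ⟨q, p⟩ ⟨q', p'⟩
  rw [Matrix.conjTranspose_apply, choi_adjMap, choi_adjMap]
  have : star (choi φ (p', q') (p, q)) = (choi φ)ᴴ (p, q) (p', q') := rfl
  rw [this, hc]

lemma idTensor_isHermitian {z x y : ℕ} {σ : MMap x y} (hσ : IsHermP σ)
    {M : Matrix (Fin z × Fin x) (Fin z × Fin x) ℂ} (hM : M.IsHermitian) :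
    (idTensor σ M).IsHermitian := by
  ext ⟨p, q⟩ ⟨p', q'⟩
  rw [Matrix.conjTranspose_apply]
  show star (σ (Matrix.of fun k l => M (p', k) (p, l)) q' q)
      = σ (Matrix.of fun k l => M (p, k) (p', l)) q q'
  have hN : (Matrix.of fun k l => M (p', k) (p, l))
      = (Matrix.of fun k l => M (p, k) (p', l))ᴴ := by
    ext k l
    rw [Matrix.conjTranspose_apply]
    have : star (M (p, l) (p', k)) = Mᴴ (p', k) (p, l) := rfl
    rw [Matrix.of_apply, Matrix.of_apply, this, hM]
  rw [hN, hσ]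
  simp [Matrix.conjTranspose_apply]

lemma idTensor_choi_id {m n : ℕ} (σ : MMap m n) :
    idTensor σ (choi (LinearMap.id : MMap m m)) = choi σ := by
  ext ⟨p₁, p₂⟩ ⟨q₁, q₂⟩
  show σ (Matrix.of fun k l => choi (LinearMap.id : MMap m m) (p₁, k) (q₁, l)) p₂ q₂
      = choi σ (p₁, p₂) (q₁, q₂)
  rw [choi_apply]
  congr 1

lemma choi_id_eq_vproj (m : ℕ) :
    choi (LinearMap.id : MMap m m) = vproj (fun p => if p.1 = p.2 then 1 else 0) := by
  ext ⟨p₁, p₂⟩ ⟨q₁, q₂⟩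
  rw [choi_apply]
  show Matrix.single p₁ q₁ (1 : ℂ) p₂ q₂ = _
  simp [vproj, Matrix.single]
  split_ifs <;> simp_all

lemma mpair_adj {m n : ℕ} (φ : MMap m n) (a : Mat m) (b : Mat n) :
    mpair (φ a) b = mpair a (adjMap φ b) := by
  simp only [mpair_eq_sum, adjMap_apply]
  calc ∑ s, ∑ t, φ a s t * b s t
      = ∑ s, ∑ t, (∑ p, ∑ p', a p p' * choi φ (p, s) (p', t)) * b s t := by
        simp only [map_eq_choi]
    _ = ∑ p, ∑ p', ∑ s, ∑ t, (a p p' * choi φ (p, s) (p', t)) * b s t := by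
        have := sum4_comm (fun (s : Fin n) (t : Fin n) (p : Fin m) (p' : Fin m) =>
          (a p p' * choi φ (p, s) (p', t)) * b s t)
        rw [← this]
        simp [Finset.sum_mul]
    _ = ∑ p, ∑ p', a p p' * ∑ s, ∑ t, φ (Matrix.single p p' 1) s t * b s t := by
        apply Finset.sum_congr rfl; intro p _
        apply Finset.sum_congr rfl; intro p' _
        simp only [Finset.mul_sum]
        apply Finset.sum_congr rfl; intro s _
        apply Finset.sum_congr rfl; intro t _
        rw [choi_apply]
        ring

/-- duality of the pairing against ampliations -/
lemma mpair_idTensor {z x y : ℕ} (τ : MMap x y) (M : Matrix (Fin z × Fin x) (Fin z × Fin x) ℂ)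
    (N : Matrix (Fin z × Fin y) (Fin z × Fin y) ℂ) :
    mpair (idTensor τ M) N = mpair M (idTensor (adjMap τ) N) := by
  rw [mpair_pair, mpair_pair]
  apply Finset.sum_congr rfl; intro p _
  apply Finset.sum_congr rfl; intro p' _
  have key : mpair (τ (Matrix.of fun k l => M (p, k) (p', l)))
      (Matrix.of fun s t => N (p, s) (p', t))
      = mpair (Matrix.of fun k l => M (p, k) (p', l))
        (adjMap τ (Matrix.of fun s t => N (p, s) (p', t))) := by
    exact mpair_adj τ _ _
  rw [mpair_eq_sum, mpair_eq_sum] at key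
  calc ∑ q, ∑ q', idTensor τ M (p, q) (p', q') * N (p, q) (p', q')
      = ∑ q, ∑ q', τ (Matrix.of fun k l => M (p, k) (p', l)) q q'
          * (Matrix.of fun s t => N (p, s) (p', t)) q q' := rfl
    _ = ∑ k, ∑ l, (Matrix.of fun k l => M (p, k) (p', l)) k l
          * adjMap τ (Matrix.of fun s t => N (p, s) (p', t)) k l := key
    _ = ∑ q, ∑ q', M (p, q) (p', q') * idTensor (adjMap τ) N (p, q) (p', q') := rfl


lemma mpair_comm {ι : Type*} [Fintype ι] (x y : Matrix ι ι ℂ) : mpair x y = mpair y x := by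
  simp [mpair_eq_sum, mul_comm]

lemma vproj_posSemidef {ι : Type*} [Fintype ι] (ξ : ι → ℂ) : (vproj ξ).PosSemidef := by
  refine Matrix.PosSemidef.of_dotProduct_mulVec_nonneg ?_ ?_
  · ext p q; simp [vproj, Matrix.IsHermitian, conjTranspose_apply, mul_comm]
  · intro x
    have : star x ⬝ᵥ (vproj ξ) *ᵥ x = star (∑ q, star (ξ q) * x q) * (∑ q, star (ξ q) * x q) := by
      simp only [vproj, dotProduct, Matrix.mulVec, Matrix.of_apply, Pi.star_apply,
        star_sum, StarMul.star_mul, star_star, Finset.sum_mul, Finset.mul_sum]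
      rw [Finset.sum_comm]
      apply Finset.sum_congr rfl; intro q _
      apply Finset.sum_congr rfl; intro p _
      ring
    rw [this]
    exact star_mul_self_nonneg _

open scoped MatrixOrder in
lemma psd_exists_conjT_mul {ι : Type*} [Fintype ι] [DecidableEq ι] {M : Matrix ι ι ℂ}
    (hM : M.PosSemidef) : ∃ B : Matrix ι ι ℂ, M = Bᴴ * B := by
  obtain ⟨B, hB⟩ := CStarAlgebra.nonneg_iff_eq_star_mul_self.mp hM.nonneg
  exact ⟨B, hB⟩

lemma psd_eq_sum_vproj {ι : Type*} [Fintype ι] [DecidableEq ι] {M : Matrix ι ι ℂ}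
    (hM : M.PosSemidef) : ∃ w : ι → ι → ℂ, M = ∑ r, vproj (w r) := by
  obtain ⟨B, hB⟩ := psd_exists_conjT_mul hM
  refine ⟨fun r i => star (B r i), ?_⟩
  ext i j
  simp [hB, Matrix.mul_apply, vproj, Matrix.sum_apply, conjTranspose_apply]

lemma mpair_nonneg {ι : Type*} [Fintype ι] [DecidableEq ι] {A B : Matrix ι ι ℂ}
    (hA : A.PosSemidef) (hB : B.PosSemidef) : 0 ≤ mpair A B := by
  obtain ⟨C, hC⟩ := psd_exists_conjT_mul hB
  have : mpair A B = ∑ r, star (fun i => C r i) ⬝ᵥ A *ᵥ (fun i => C r i) := by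
    rw [mpair_eq_sum, hC]
    simp only [Matrix.mul_apply, conjTranspose_apply, Finset.mul_sum]
    have h1 : ∀ i : ι, ∑ j, ∑ r, A i j * (star (C r i) * C r j)
        = ∑ r, ∑ j, A i j * (star (C r i) * C r j) := fun i => Finset.sum_comm
    simp only [h1]
    rw [Finset.sum_comm]
    apply Finset.sum_congr rfl; intro r _
    simp only [dotProduct, Matrix.mulVec, Pi.star_apply, Finset.mul_sum, dotProduct]
    apply Finset.sum_congr rfl; intro i _
    apply Finset.sum_congr rfl; intro j _
    ring
  rw [this]
  exact Finset.sum_nonneg fun r _ => hA.dotProduct_mulVec_nonneg _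

-- ===== block 4 =====

lemma mpair_sum_left {ι κ : Type*} [Fintype ι] [Fintype κ] (A : κ → Matrix ι ι ℂ)
    (B : Matrix ι ι ℂ) : mpair (∑ r, A r) B = ∑ r, mpair (A r) B := by
  simp [mpair, Matrix.transpose_sum, Matrix.sum_mul, Matrix.trace_sum]

lemma mpair_sum_right {ι κ : Type*} [Fintype ι] [Fintype κ] (A : Matrix ι ι ℂ)
    (B : κ → Matrix ι ι ℂ) : mpair A (∑ r, B r) = ∑ r, mpair A (B r) := by
  simp [mpair, Matrix.mul_sum, Matrix.trace_sum]

lemma dot_eq_mpair {ι : Type*} [Fintype ι] (M : Matrix ι ι ℂ) (y : ι → ℂ) :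
    star y ⬝ᵥ M *ᵥ y = mpair M (vproj (fun i => star (y i))) := by
  rw [mpair_eq_sum]
  simp only [dotProduct, Matrix.mulVec, Pi.star_apply, vproj, Matrix.of_apply,
    Finset.mul_sum, dotProduct]
  apply Finset.sum_congr rfl; intro i _
  apply Finset.sum_congr rfl; intro j _
  simp only [star_star]
  ring

/-- Key identity: pairing an ampliated rank-one against a rank-one. -/
lemma identI {z x y : ℕ} (ψ : MMap x y) (c : Fin z × Fin x → ℂ) (ζ : Fin z × Fin y → ℂ) :
    mpair (idTensor ψ (vproj c)) (vproj ζ)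
      = mpair (choi ψ) (vproj fun sq : Fin x × Fin y => ∑ p, c (p, sq.1) * ζ (p, sq.2)) := by
  rw [mpair_pair, mpair_pair]
  rw [sum4_comm]
  conv_rhs => rw [sum4_comm]
  apply Finset.sum_congr rfl; intro q _
  apply Finset.sum_congr rfl; intro q' _
  calc ∑ p, ∑ p', idTensor ψ (vproj c) (p, q) (p', q') * vproj ζ (p, q) (p', q')
      = ∑ p, ∑ p', ∑ s, ∑ t, (vproj c (p, s) (p', t) * choi ψ (s, q) (t, q'))
          * vproj ζ (p, q) (p', q') := by
        apply Finset.sum_congr rfl; intro p _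
        apply Finset.sum_congr rfl; intro p' _
        rw [idTensor_apply_choi]
        simp [Finset.sum_mul]
    _ = ∑ s, ∑ t, ∑ p, ∑ p', (vproj c (p, s) (p', t) * choi ψ (s, q) (t, q'))
          * vproj ζ (p, q) (p', q') := sum4_comm _
    _ = ∑ s, ∑ t, choi ψ (s, q) (t, q')
          * vproj (fun sq : Fin x × Fin y => ∑ p, c (p, sq.1) * ζ (p, sq.2)) (s, q) (t, q') := by
        apply Finset.sum_congr rfl; intro s _
        apply Finset.sum_congr rfl; intro t _
        simp only [vproj, Matrix.of_apply, star_sum, Finset.mul_sum, Finset.sum_mul]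
        rw [Finset.sum_comm]
        apply Finset.sum_congr rfl; intro p _
        apply Finset.sum_congr rfl; intro p' _
        simp only [StarMul.star_mul]
        ring

/-- Ampliation of a map with rank-one-decomposed Choi matrix on a rank-one. -/
lemma idTensor_vproj_eq {z x y : ℕ} {ι : Type*} [Fintype ι] (ψ : MMap x y)
    (w : ι → Fin x × Fin y → ℂ) (hw : choi ψ = ∑ r, vproj (w r))
    (ζ : Fin z × Fin x → ℂ) :
    idTensor ψ (vproj ζ)
      = ∑ r, vproj (fun pq : Fin z × Fin y => ∑ s, ζ (pq.1, s) * w r (s, pq.2)) := by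
  ext ⟨p, q⟩ ⟨p', q'⟩
  rw [idTensor_apply_choi, Matrix.sum_apply]
  simp only [hw, Matrix.sum_apply, vproj, Matrix.of_apply, Finset.mul_sum]
  have h1 : ∀ s : Fin x, ∑ t : Fin x, ∑ r : ι,
      ζ (p, s) * star (ζ (p', t)) * (w r (s, q) * star (w r (t, q')))
      = ∑ r : ι, ∑ t : Fin x,
      ζ (p, s) * star (ζ (p', t)) * (w r (s, q) * star (w r (t, q'))) :=
    fun s => Finset.sum_comm
  simp only [h1]
  rw [Finset.sum_comm]
  apply Finset.sum_congr rfl; intro r _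
  simp only [star_sum, Finset.mul_sum, Finset.sum_mul]
  rw [Finset.sum_comm]
  apply Finset.sum_congr rfl; intro s _
  apply Finset.sum_congr rfl; intro t _
  simp only [StarMul.star_mul]
  ring

lemma schmidtRank_comp_left {z x y k : ℕ} {ζ : Fin z × Fin x → ℂ}
    (hζ : SchmidtRankLE k ζ) (w : Fin x × Fin y → ℂ) :
    SchmidtRankLE k (fun pq : Fin z × Fin y => ∑ s, ζ (pq.1, s) * w (s, pq.2)) := by
  obtain ⟨u, v, h⟩ := hζ
  refine ⟨u, fun i q => ∑ s, v i s * w (s, q), ?_⟩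
  funext pq
  rw [h]
  simp only [Finset.sum_mul, Finset.mul_sum]
  rw [Finset.sum_comm]
  apply Finset.sum_congr rfl; intro i _
  apply Finset.sum_congr rfl; intro s _
  ring

lemma schmidtRank_comp_right {z x y k : ℕ} {w : Fin x × Fin y → ℂ}
    (hw : SchmidtRankLE k w) (ζ : Fin z × Fin x → ℂ) :
    SchmidtRankLE k (fun pq : Fin z × Fin y => ∑ s, ζ (pq.1, s) * w (s, pq.2)) := by
  obtain ⟨u, v, h⟩ := hw
  refine ⟨fun i p => ∑ s, ζ (p, s) * u i s, v, ?_⟩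
  funext pq
  rw [h]
  simp only [Finset.sum_mul, Finset.mul_sum]
  rw [Finset.sum_comm]
  apply Finset.sum_congr rfl; intro i _
  apply Finset.sum_congr rfl; intro s _
  ring

-- ===== block 5 =====

def idTensorML {z x y : ℕ} (σ : MMap x y) :
    Matrix (Fin z × Fin x) (Fin z × Fin x) ℂ →ₗ[ℂ] Matrix (Fin z × Fin y) (Fin z × Fin y) ℂ where
  toFun := idTensor σ
  map_add' M N := by
    ext p q
    show σ (Matrix.of fun k l => M (p.1, k) (q.1, l) + N (p.1, k) (q.1, l)) p.2 q.2 = _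
    rw [show (Matrix.of fun k l => M (p.1, k) (q.1, l) + N (p.1, k) (q.1, l))
        = (Matrix.of fun k l => M (p.1, k) (q.1, l))
          + (Matrix.of fun k l => N (p.1, k) (q.1, l)) from rfl, map_add]
    rfl
  map_smul' c M := by
    ext p q
    show σ (Matrix.of fun k l => c • M (p.1, k) (q.1, l)) p.2 q.2 = _
    rw [show (Matrix.of fun k l => c • M (p.1, k) (q.1, l))
        = c • (Matrix.of fun k l => M (p.1, k) (q.1, l)) from rfl, _root_.map_smul]
    rfl

lemma idTensorML_apply {z x y : ℕ} (σ : MMap x y)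
    (M : Matrix (Fin z × Fin x) (Fin z × Fin x) ℂ) : idTensorML σ M = idTensor σ M := rfl

lemma idTensor_sum {z x y : ℕ} {ι : Type*} [Fintype ι] (σ : MMap x y)
    (f : ι → Matrix (Fin z × Fin x) (Fin z × Fin x) ℂ) :
    idTensor σ (∑ r, f r) = ∑ r, idTensor σ (f r) := by
  have := map_sum (idTensorML (z := z) σ) f Finset.univ
  simpa only [idTensorML_apply] using this

lemma blockPos_choi_of_isKPos {a b k : ℕ} {φ : MMap a b} (h : IsKPos k φ) :
    BlockPos k (choi φ) := by
  intro ξ hξ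
  obtain ⟨u, v, hξ'⟩ := hξ
  set c : Fin k × Fin a → ℂ := fun is => u is.1 is.2 with hc
  set ζ : Fin k × Fin b → ℂ := fun iq => v iq.1 iq.2 with hζ
  have hpsd := h (vproj c) (vproj_posSemidef c)
  have e : (fun sq : Fin a × Fin b => ∑ p, c (p, sq.1) * ζ (p, sq.2)) = ξ := by
    funext sq
    rw [hξ']
  show 0 ≤ mpair (choi φ) (vproj ξ)
  rw [← e, ← identI]
  exact mpair_nonneg hpsd (vproj_posSemidef ζ)

lemma isKPos_of_blockPos {a b k : ℕ} {φ : MMap a b} (hφ : IsHermP φ)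
    (h : BlockPos k (choi φ)) : IsKPos k φ := by
  intro X hX
  obtain ⟨w, hw⟩ := psd_eq_sum_vproj hX
  refine Matrix.PosSemidef.of_dotProduct_mulVec_nonneg ?_ ?_
  · exact idTensor_isHermitian hφ hX.1
  · intro y
    rw [dot_eq_mpair]
    have hsum : idTensor φ X = ∑ r, idTensor φ (vproj (w r)) := by
      rw [hw, idTensor_sum]
    rw [hsum, mpair_sum_left]
    apply Finset.sum_nonneg
    intro r _
    rw [identI]
    have hrank : SchmidtRankLE k
        (fun sq : Fin a × Fin b => ∑ p, w r (p, sq.1) * star (y (p, sq.2))) :=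
      ⟨fun i s => w r (i, s), fun i q => star (y (i, q)), rfl⟩
    exact h _ hrank

lemma idTensor_vproj_psd {z x y k : ℕ} {ψ : MMap x y} (hH : IsHermP ψ)
    (hB : BlockPos k (choi ψ)) {ξ : Fin z × Fin x → ℂ} (hξ : SchmidtRankLE k ξ) :
    (idTensor ψ (vproj ξ)).PosSemidef := by
  refine Matrix.PosSemidef.of_dotProduct_mulVec_nonneg ?_ ?_
  · exact idTensor_isHermitian hH (vproj_posSemidef ξ).1
  · intro yv
    rw [dot_eq_mpair, identI]
    obtain ⟨u, v, h⟩ := hξ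
    have hrank : SchmidtRankLE k
        (fun sq : Fin x × Fin y => ∑ p, ξ (p, sq.1) * star (yv (p, sq.2))) := by
      refine ⟨fun i s => v i s, fun i q => ∑ p, u i p * star (yv (p, q)), ?_⟩
      funext sq
      rw [h]
      simp only [Finset.sum_mul, Finset.mul_sum]
      rw [Finset.sum_comm]
      apply Finset.sum_congr rfl; intro i _
      apply Finset.sum_congr rfl; intro p _
      ring
    exact hB _ hrank

lemma blockPos_choi_adjMap {m n k : ℕ} {φ : MMap m n} (h : BlockPos k (choi φ)) :
    BlockPos k (choi (adjMap φ)) := by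
  intro ξ hξ
  obtain ⟨u, v, hξ'⟩ := hξ
  set ξ' : Fin m × Fin n → ℂ := fun pq => ξ (pq.2, pq.1) with hdef
  have hrank : SchmidtRankLE k ξ' := by
    refine ⟨v, u, ?_⟩
    funext pq
    rw [hdef]
    show ξ (pq.2, pq.1) = _
    rw [hξ']
    exact Finset.sum_congr rfl fun i _ => mul_comm _ _
  have := h ξ' hrank
  have e : mpair (choi (adjMap φ)) (vproj ξ) = mpair (choi φ) (vproj ξ') := by
    rw [mpair_eq_sum, mpair_eq_sum]
    apply Fintype.sum_equiv (Equiv.prodComm (Fin n) (Fin m))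
    intro ⟨q, p⟩
    apply Fintype.sum_equiv (Equiv.prodComm (Fin n) (Fin m))
    intro ⟨q', p'⟩
    rw [choi_adjMap]
    rfl
  show 0 ≤ mpair (choi (adjMap φ)) (vproj ξ)
  rw [e]
  exact this

lemma psd_choi_adjMap {m n : ℕ} {ψ : MMap m n} (h : (choi ψ).PosSemidef) :
    (choi (adjMap ψ)).PosSemidef := by
  have e : choi (adjMap ψ) = (choi ψ).submatrix Prod.swap Prod.swap := by
    ext ⟨q, p⟩ ⟨q', p'⟩
    rw [choi_adjMap]
    rfl
  rw [e]
  exact h.submatrix _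

lemma choi_id_psd (m : ℕ) : (choi (LinearMap.id : MMap m m)).PosSemidef := by
  rw [choi_id_eq_vproj]
  exact vproj_posSemidef _

lemma idTensor_id {z m : ℕ} (M : Matrix (Fin z × Fin m) (Fin z × Fin m) ℂ) :
    idTensor (LinearMap.id : MMap m m) M = M := by
  ext ⟨p, q⟩ ⟨p', q'⟩
  rfl

lemma psd_sum {ι κ : Type*} [Fintype ι] [Fintype κ] (f : κ → Matrix ι ι ℂ)
    (h : ∀ r, (f r).PosSemidef) : (∑ r, f r).PosSemidef :=
  Finset.sum_induction f _ (fun _ _ ha hb => ha.add hb) Matrix.PosSemidef.zero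
    (fun r _ => h r)

lemma isClosed_psd {ι : Type*} [Fintype ι] :
    IsClosed {M : Matrix ι ι ℂ | M.PosSemidef} := by
  have he : {M : Matrix ι ι ℂ | M.PosSemidef}
      = {M : Matrix ι ι ℂ | Mᴴ = M} ∩ ⋂ v : ι → ℂ, {M | 0 ≤ star v ⬝ᵥ M *ᵥ v} := by
    ext M
    simp only [Set.mem_setOf_eq, Set.mem_inter_iff, Set.mem_iInter]
    exact Matrix.posSemidef_iff_dotProduct_mulVec
  rw [he]
  have hcoord : ∀ (i j : ι), Continuous fun M : Matrix ι ι ℂ => M i j := by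
    intro i j
    exact (continuous_apply j).comp (continuous_apply i)
  apply IsClosed.inter
  · apply isClosed_eq _ continuous_id
    exact continuous_pi fun i => continuous_pi fun j => ((hcoord j i).star)
  · apply isClosed_iInter
    intro v
    have hc : Continuous fun M : Matrix ι ι ℂ => star v ⬝ᵥ M *ᵥ v := by
      simp only [dotProduct, Matrix.mulVec, Pi.star_apply]
      apply continuous_finset_sum
      intro i _
      apply Continuous.mul continuous_const
      apply continuous_finset_sum
      intro j _
      exact ((hcoord i j).mul continuous_const)
    have hcl : IsClosed {z : ℂ | 0 ≤ z} := by
      have : {z : ℂ | 0 ≤ z}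
          = Complex.re ⁻¹' Set.Ici (0 : ℝ) ∩ Complex.im ⁻¹' {0} := by
        ext z
        simp [Complex.le_def, eq_comm]
      rw [this]
      exact (IsClosed.preimage Complex.continuous_re isClosed_Ici).inter
        (IsClosed.preimage Complex.continuous_im isClosed_singleton)
    exact IsClosed.preimage hc hcl

lemma psd_of_mem_closure {ι κ : Type*} [Fintype ι] [Fintype κ]
    (S : Set (Matrix ι ι ℂ)) (F : Matrix ι ι ℂ →ₗ[ℂ] Matrix κ κ ℂ)
    (h : ∀ X ∈ S, (F X).PosSemidef) {X : Matrix ι ι ℂ} (hX : X ∈ closure S) :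
    (F X).PosSemidef := by
  have hcont : Continuous F := F.continuous_of_finiteDimensional
  have h1 : F X ∈ closure (F '' S) := by
    apply image_closure_subset_closure_image hcont
    exact Set.mem_image_of_mem _ hX
  have h2 : closure (F '' S) ⊆ {M : Matrix κ κ ℂ | M.PosSemidef} := by
    apply (isClosed_psd).closure_subset_iff.mpr
    rintro _ ⟨Y, hY, rfl⟩
    exact h Y hY
  exact h2 h1

-- ===== block 6 =====

lemma mpair_add_left {ι : Type*} [Fintype ι] (A B C : Matrix ι ι ℂ) :
    mpair (A + B) C = mpair A C + mpair B C := by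
  simp [mpair, Matrix.transpose_add, Matrix.add_mul, Matrix.trace_add]

lemma mpair_smul_left {ι : Type*} [Fintype ι] (c : ℂ) (A B : Matrix ι ι ℂ) :
    mpair (c • A) B = c * mpair A B := by
  simp [mpair, Matrix.transpose_smul, Matrix.smul_mul, Matrix.trace_smul]

noncomputable def adjMapL {m n : ℕ} : MMap m n →ₗ[ℂ] MMap n m where
  toFun := adjMap
  map_add' φ ψ := by
    apply LinearMap.ext; intro y
    ext i j
    show mpair ((φ + ψ) (Matrix.single i j 1)) y = _
    simp [LinearMap.add_apply, mpair_add_left, adjMap_apply]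
  map_smul' c φ := by
    apply LinearMap.ext; intro y
    ext i j
    show mpair ((c • φ) (Matrix.single i j 1)) y = _
    simp [LinearMap.smul_apply, mpair_smul_left, adjMap_apply]

lemma adjMapL_apply {m n : ℕ} (φ : MMap m n) : adjMapL φ = adjMap φ := rfl

noncomputable def ofChoiL {m n : ℕ} :
    Matrix (Fin m × Fin n) (Fin m × Fin n) ℂ →ₗ[ℂ] MMap m n where
  toFun := ofChoi
  map_add' C D := by
    apply LinearMap.ext; intro x
    ext q q'
    show ofChoi (C + D) x q q' = ofChoi C x q q' + ofChoi D x q q'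
    simp [ofChoi_apply, Matrix.add_apply, mul_add, Finset.sum_add_distrib]
  map_smul' c C := by
    apply LinearMap.ext; intro x
    ext q q'
    show ofChoi (c • C) x q q' = c * ofChoi C x q q'
    simp only [ofChoi_apply, Matrix.smul_apply, smul_eq_mul, Finset.mul_sum]
    apply Finset.sum_congr rfl; intro p _
    apply Finset.sum_congr rfl; intro p' _
    ring

def idTensorSL {z x y : ℕ} (M : Matrix (Fin z × Fin x) (Fin z × Fin x) ℂ) :
    MMap x y →ₗ[ℂ] Matrix (Fin z × Fin y) (Fin z × Fin y) ℂ where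
  toFun σ := idTensor σ M
  map_add' σ τ := by
    ext p q
    rfl
  map_smul' c σ := by
    ext p q
    rfl


/-- ampliation characterizations of `k`-positivity. -/
theorem stmt17 {a b : ℕ} (φ : MMap a b) (hφ : IsHermP φ) (k : ℕ) (hk : 1 ≤ k) :
    (IsKPos k φ ↔
      ∀ X : Matrix (Fin a × Fin a) (Fin a × Fin a) ℂ, X.PosSemidef →
        BlockPos k (idTensor φ X)) ∧
    (IsKPos k φ ↔
      ∀ ψ : MMap a a, IsCP ψ → BlockPos k (idTensor ψ (choi (adjMap φ)))) ∧
    (IsKPos k φ ↔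
      ∀ σ : MMap a b, choi σ ∈ SchmidtCone k a b →
        (idTensor (adjMap σ) (choi φ)).PosSemidef) ∧
    (IsKPos k φ ↔
      ∀ X ∈ SchmidtCone k a b, (idTensor (adjMap φ) X).PosSemidef) := by
  have hA : IsKPos k φ ↔ BlockPos k (choi φ) :=
    ⟨blockPos_choi_of_isKPos, isKPos_of_blockPos hφ⟩
  refine ⟨?_, ?_, ?_, ?_⟩
  · constructor
    · intro hKP X hX ξ hξ
      show 0 ≤ mpair (idTensor φ X) (vproj ξ)
      rw [mpair_idTensor]
      exact mpair_nonneg hX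
        (idTensor_vproj_psd (isHermP_adjMap hφ) (blockPos_choi_adjMap (hA.mp hKP)) hξ)
    · intro H
      apply isKPos_of_blockPos hφ
      have h0 := H (choi (LinearMap.id : MMap a a)) (choi_id_psd a)
      rwa [idTensor_choi_id] at h0
  · constructor
    · intro hKP ψ hψ ξ hξ
      show 0 ≤ mpair (idTensor ψ (choi (adjMap φ))) (vproj ξ)
      rw [mpair_idTensor]
      obtain ⟨w, hw⟩ := psd_eq_sum_vproj (psd_choi_adjMap hψ)
      rw [idTensor_vproj_eq (adjMap ψ) w hw ξ, mpair_sum_right]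
      apply Finset.sum_nonneg
      intro r _
      exact blockPos_choi_adjMap (hA.mp hKP) _ (schmidtRank_comp_left hξ (w r))
    · intro H
      apply isKPos_of_blockPos hφ
      have h0 := H LinearMap.id (choi_id_psd a)
      rw [idTensor_id] at h0
      have h1 := blockPos_choi_adjMap h0
      rwa [adjMap_adjMap] at h1
  · constructor
    · intro hKP σ hσ
      have hFσ : idTensor (adjMap σ) (choi φ)
          = ((idTensorSL (choi φ)).comp (adjMapL.comp ofChoiL)) (choi σ) := by
        rw [show ((idTensorSL (choi φ)).comp (adjMapL.comp ofChoiL)) (choi σ)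
            = idTensor (adjMap (ofChoi (choi σ))) (choi φ) from rfl, ofChoi_choi]
      rw [hFσ]
      apply psd_of_mem_closure _ _ ?_ hσ
      rintro Y ⟨r, ξs, hrank, rfl⟩
      rw [map_sum]
      apply psd_sum
      intro i
      have he : ((idTensorSL (choi φ)).comp (adjMapL.comp ofChoiL))
            (Matrix.of fun p q => ξs i p * star (ξs i q))
          = idTensor (adjMap (ofChoi (vproj (ξs i)))) (choi φ) := rfl
      rw [he]
      have hci : choi (ofChoi (vproj (ξs i))) = vproj (ξs i) := choi_ofChoi _
      refine Matrix.PosSemidef.of_dotProduct_mulVec_nonneg ?_ ?_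
      · exact idTensor_isHermitian
          (isHermP_adjMap (isHermP_of_choi (by rw [hci]; exact (vproj_posSemidef _).1)))
          (isHermitian_choi hφ)
      · intro yv
        rw [dot_eq_mpair, mpair_idTensor, adjMap_adjMap]
        have hw1 : choi (ofChoi (vproj (ξs i))) = ∑ _j : Fin 1, vproj (ξs i) := by
          rw [hci]; simp
        rw [idTensor_vproj_eq _ (fun _ => ξs i) hw1, mpair_sum_right]
        apply Finset.sum_nonneg
        intro j _
        exact hA.mp hKP _ (schmidtRank_comp_right (hrank i) (fun ps => star (yv ps)))
    · intro H
      apply isKPos_of_blockPos hφ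
      intro ξ hξ
      have hmem : choi (ofChoi (vproj ξ)) ∈ SchmidtCone k a b := by
        rw [choi_ofChoi]
        apply subset_closure
        exact ⟨1, fun _ => ξ, fun _ => hξ, by simp; rfl⟩
      have h2 := H _ hmem
      show 0 ≤ mpair (choi φ) (vproj ξ)
      have e1 : (vproj ξ : Matrix (Fin a × Fin b) (Fin a × Fin b) ℂ)
          = idTensor (ofChoi (vproj ξ)) (choi (LinearMap.id : MMap a a)) := by
        rw [idTensor_choi_id, choi_ofChoi]
      rw [e1, mpair_comm, mpair_idTensor]
      exact mpair_nonneg (choi_id_psd a) h2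
  · constructor
    · intro hKP X hX
      rw [show idTensor (adjMap φ) X = idTensorML (adjMap φ) X from rfl]
      apply psd_of_mem_closure _ _ ?_ hX
      rintro Y ⟨r, ξs, hrank, rfl⟩
      rw [map_sum]
      apply psd_sum
      intro i
      rw [show idTensorML (adjMap φ) (Matrix.of fun p q => ξs i p * star (ξs i q))
          = idTensor (adjMap φ) (vproj (ξs i)) from rfl]
      exact idTensor_vproj_psd (isHermP_adjMap hφ) (blockPos_choi_adjMap (hA.mp hKP)) (hrank i)
    · intro H
      apply isKPos_of_blockPos hφ
      intro ξ hξ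
      have hmem : (Matrix.of fun p q => ξ p * star (ξ q)) ∈ SchmidtCone k a b := by
        apply subset_closure
        exact ⟨1, fun _ => ξ, fun _ => hξ, by simp⟩
      have h2 := H _ hmem
      show 0 ≤ mpair (choi φ) (vproj ξ)
      rw [show choi φ = idTensor φ (choi (LinearMap.id : MMap a a)) from
        (idTensor_choi_id φ).symm]
      rw [mpair_idTensor]
      exact mpair_nonneg (choi_id_psd a) h2
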